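/- arXiv:2503.00500 — 2 statements merged into one kernel-verified Lean document; each statement's English description precedes it below -/
import Mathlib

section
/- If a power series x ∈ ℤ_p[[τ]] has logarithmically decaying coefficients, then so does τ²·(dx/dτ), where dx/dτ is the formal derivative. (In particular, the subring ℤ_p⟨⟨τ⟩⟩ is preserved by the differential operator τ²∂_τ.) -/
/-- `x ∈ ℤ_p[[τ]]` has logarithmically decaying coefficients: there are `α, β ∈ ℕ` such that
for every `m` and every `k > α·p^m + β`, the coefficient `x_k` is divisible by `p^m`. -/
def HasLogDecay (p : ℕ) [Fact p.Prime] (x : PowerSeries ℤ_[p]) : Prop :=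
  ∃ α β : ℕ, ∀ m k : ℕ, k > α * p ^ m + β → (p : ℤ_[p]) ^ m ∣ PowerSeries.coeff k x

/-- If `x ∈ ℤ_p[[τ]]` has logarithmically decaying coefficients, then so does `τ²·(dx/dτ)`;
that is, `ℤ_p⟨⟨τ⟩⟩` is preserved by the differential operator `τ²∂_τ`. -/
theorem hasLogDecay_X_sq_mul_derivative (p : ℕ) [Fact p.Prime] (x : PowerSeries ℤ_[p])
    (hx : HasLogDecay p x) :
    HasLogDecay p (PowerSeries.X ^ 2 * PowerSeries.derivative ℤ_[p] x) := by
  obtain ⟨α, β, h⟩ := hx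
  refine ⟨α, β + 2, fun m k hk => ?_⟩
  rw [PowerSeries.coeff_X_pow_mul']
  have h2 : 2 ≤ k := by omega
  rw [if_pos h2, PowerSeries.coeff_derivative]
  have hk1 : k - 2 + 1 = k - 1 := by omega
  rw [hk1]
  exact Dvd.dvd.mul_right (h m (k - 1) (by omega)) _
end

section
/- Let R be an integral domain, r ≥ 1, and A = Σ_{m≥0} A^m τ^m an r×r matrix over R[[τ]]. Suppose λ_1, …, λ_s ∈ R are distinct elements with λ_i − λ_j invertible in R for all i ≠ j, the characteristic polynomial of the leading term A^0 equals ∏_i (X − λ_i)^{r_i} for some multiplicities r_i, and for each i there is an idempotent matrix P_i ∈ Mat_{r×r}(R) with P_1 + ⋯ + P_s = 1, P_iP_j = 0 for i ≠ j, A^0P_i = P_iA^0, and (A^0 − λ_i·1)^r · P_i = 0 (the generalized eigenprojections of A^0). Then there exists a unique family E_1, …, E_s of r×r matrices over R[[τ]] such that each E_i is covariantly constant for A, E_1 + ⋯ + E_s = 1, E_iE_j = 0 for i ≠ j, and the constant term of E_i equals P_i. -/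
/-- The entrywise formal derivative of a matrix of power series. -/
noncomputable def matDeriv {R : Type} [CommRing R] {r : ℕ}
    (E : Matrix (Fin r) (Fin r) (PowerSeries R)) : Matrix (Fin r) (Fin r) (PowerSeries R) :=
  fun i j => PowerSeries.derivative R (E i j)

/-- The constant term (evaluation at `τ = 0`) of a matrix of power series. -/
noncomputable def constTerm {R : Type} [CommRing R] {r : ℕ}
    (E : Matrix (Fin r) (Fin r) (PowerSeries R)) : Matrix (Fin r) (Fin r) R :=
  fun i j => PowerSeries.constantCoeff (R := R) (E i j)

/-- `E` is covariantly constant for `A` (w.r.t. `∇ = τ²d/dτ + A`):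
`τ²·(dE/dτ) + A·E − E·A = 0`. -/
def IsCovariantlyConstant {R : Type} [CommRing R] {r : ℕ}
    (A E : Matrix (Fin r) (Fin r) (PowerSeries R)) : Prop :=
  (PowerSeries.X ^ 2 : PowerSeries R) • matDeriv E + A * E - E * A = 0

namespace CovSplit

variable {R : Type} [CommRing R] {r s : ℕ}

/-- coefficient extraction -/
noncomputable def mcoeff (n : ℕ) (E : Matrix (Fin r) (Fin r) (PowerSeries R)) : Matrix (Fin r) (Fin r) R :=
  fun i j => PowerSeries.coeff (R := R) n (E i j)

/-- matrix of power series from coefficient sequence -/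
noncomputable def mmk (e : ℕ → Matrix (Fin r) (Fin r) R) : Matrix (Fin r) (Fin r) (PowerSeries R) :=
  fun i j => PowerSeries.mk (fun n => e n i j)

@[simp] lemma mcoeff_mmk (e : ℕ → Matrix (Fin r) (Fin r) R) (n : ℕ) : mcoeff n (mmk e) = e n := by
  funext i j; simp [mcoeff, mmk]

@[simp] lemma mcoeff_add (n : ℕ) (E F : Matrix (Fin r) (Fin r) (PowerSeries R)) :
    mcoeff n (E + F) = mcoeff n E + mcoeff n F := by
  funext i j; simp [mcoeff]

@[simp] lemma mcoeff_sub (n : ℕ) (E F : Matrix (Fin r) (Fin r) (PowerSeries R)) :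
    mcoeff n (E - F) = mcoeff n E - mcoeff n F := by
  funext i j; simp [mcoeff]

@[simp] lemma mcoeff_zero (n : ℕ) : mcoeff n (0 : Matrix (Fin r) (Fin r) (PowerSeries R)) = 0 := by
  funext i j; simp [mcoeff]

lemma mcoeff_one (n : ℕ) :
    mcoeff n (1 : Matrix (Fin r) (Fin r) (PowerSeries R)) =
      if n = 0 then (1 : Matrix (Fin r) (Fin r) R) else 0 := by
  funext i j
  by_cases hij : i = j <;> by_cases hn : n = 0 <;>
    simp [mcoeff, hij, hn, Matrix.one_apply, PowerSeries.coeff_one]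

lemma mcoeff_sum {ι : Type*} (t : Finset ι) (f : ι → Matrix (Fin r) (Fin r) (PowerSeries R))
    (n : ℕ) : mcoeff n (∑ i ∈ t, f i) = ∑ i ∈ t, mcoeff n (f i) := by
  funext p q
  simp [mcoeff, Matrix.sum_apply]

lemma mcoeff_mul (n : ℕ) (E F : Matrix (Fin r) (Fin r) (PowerSeries R)) :
    mcoeff n (E * F) = ∑ k ∈ Finset.range (n + 1), mcoeff k E * mcoeff (n - k) F := by
  funext p q
  have : ∀ x, (PowerSeries.coeff (R := R) n) (E p x * F x q) =
      ∑ k ∈ Finset.range (n + 1), (PowerSeries.coeff (R := R) k (E p x)) *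
        (PowerSeries.coeff (R := R) (n - k) (F x q)) := by
    intro x
    rw [PowerSeries.coeff_mul]
    exact Finset.Nat.sum_antidiagonal_eq_sum_range_succ
      (fun k l => PowerSeries.coeff (R := R) k (E p x) * PowerSeries.coeff (R := R) l (F x q)) n
  simp only [mcoeff, Matrix.mul_apply, map_sum, this, Matrix.sum_apply]
  exact Finset.sum_comm

lemma mcoeff_ext {E F : Matrix (Fin r) (Fin r) (PowerSeries R)}
    (h : ∀ n, mcoeff n E = mcoeff n F) : E = F := by
  funext i j
  ext n
  exact congrFun (congrFun (h n) i) j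

lemma constTerm_eq (E : Matrix (Fin r) (Fin r) (PowerSeries R)) : constTerm E = mcoeff 0 E := by
  funext i j; simp [constTerm, mcoeff]

lemma coeff_X_sq_mul (g : PowerSeries R) (n : ℕ) :
    PowerSeries.coeff (R := R) n ((PowerSeries.X ^ 2 : PowerSeries R) * g) =
      if 2 ≤ n then PowerSeries.coeff (R := R) (n - 2) g else 0 := by
  rw [PowerSeries.coeff_X_pow_mul']

lemma mcoeff_X2_smul (E : Matrix (Fin r) (Fin r) (PowerSeries R)) (n : ℕ) :
    mcoeff n ((PowerSeries.X ^ 2 : PowerSeries R) • matDeriv E) =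
      if 2 ≤ n then (n - 1 : ℕ) • mcoeff (n - 1) E else 0 := by
  funext p q
  simp only [mcoeff, Pi.smul_apply, Matrix.smul_apply, smul_eq_mul, matDeriv, coeff_X_sq_mul]
  by_cases hn : 2 ≤ n
  · rw [if_pos hn, if_pos hn, PowerSeries.coeff_derivative]
    have h2 : n - 2 + 1 = n - 1 := by omega
    rw [h2, Matrix.smul_apply, nsmul_eq_mul]
    have hc : ((n - 2 : ℕ) : R) + 1 = ((n - 1 : ℕ) : R) := by
      exact_mod_cast congrArg (fun k : ℕ => (k : R)) h2
    rw [hc, mul_comm]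
    rfl
  · rw [if_neg hn, if_neg hn, Matrix.zero_apply]

lemma matDeriv_mul (E F : Matrix (Fin r) (Fin r) (PowerSeries R)) :
    matDeriv (E * F) = matDeriv E * F + E * matDeriv F := by
  funext p q
  simp only [matDeriv, Matrix.mul_apply, Matrix.add_apply, map_sum]
  rw [← Finset.sum_add_distrib]
  apply Finset.sum_congr rfl
  intro x _
  rw [Derivation.leibniz]
  simp only [smul_eq_mul]
  ring

lemma matDeriv_map_C (m : Matrix (Fin r) (Fin r) R) :
    matDeriv (m.map (PowerSeries.C (R := R))) = 0 := by
  funext p q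
  simp [matDeriv, Matrix.map_apply]

lemma mcoeff_map_C (m : Matrix (Fin r) (Fin r) R) (n : ℕ) :
    mcoeff n (m.map (PowerSeries.C (R := R))) = if n = 0 then m else 0 := by
  funext p q
  by_cases hn : n = 0 <;> simp [mcoeff, Matrix.map_apply, PowerSeries.coeff_C, hn]

lemma idem_pow {A : Type*} [Monoid A] {p : A} (hp : p * p = p) :
    ∀ {n : ℕ}, 1 ≤ n → p ^ n = p := by
  intro n
  induction n with
  | zero => intro h; exact absurd h (by omega)
  | succ k ih =>
    intro _
    rcases Nat.eq_zero_or_pos k with hk | hk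
    · subst hk; rw [pow_one]
    · rw [pow_succ, ih hk, hp]

open Classical in
/-- Solve a block equation, via choice. -/
noncomputable def solveBlock (A₀ Pa Pb G : Matrix (Fin r) (Fin r) R) :
    Matrix (Fin r) (Fin r) R :=
  if h : ∃ Y, Pa * Y * Pb = Y ∧ A₀ * Y - Y * A₀ = Pa * G * Pb then h.choose else 0

lemma solveBlock_spec {A₀ Pa Pb G : Matrix (Fin r) (Fin r) R}
    (h : ∃ Y, Pa * Y * Pb = Y ∧ A₀ * Y - Y * A₀ = Pa * G * Pb) :
    Pa * solveBlock A₀ Pa Pb G * Pb = solveBlock A₀ Pa Pb G ∧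
      A₀ * solveBlock A₀ Pa Pb G - solveBlock A₀ Pa Pb G * A₀ = Pa * G * Pb := by
  simp only [solveBlock]
  rw [dif_pos h]
  exact h.choose_spec

theorem blockEU (r1 : 1 ≤ r) (A₀ : Matrix (Fin r) (Fin r) R)
    (lam : Fin s → R) (P : Fin s → Matrix (Fin r) (Fin r) R)
    (hPidem : ∀ i, P i * P i = P i)
    (hPcomm : ∀ i, A₀ * P i = P i * A₀)
    (hPgen : ∀ i, (A₀ - lam i • (1 : Matrix (Fin r) (Fin r) R)) ^ r * P i = 0)
    {a b : Fin s} (hab : a ≠ b) (hu : IsUnit (lam a - lam b))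
    (G : Matrix (Fin r) (Fin r) R) :
    ∃! Y : Matrix (Fin r) (Fin r) R,
      P a * Y * P b = Y ∧ A₀ * Y - Y * A₀ = P a * G * P b := by
  set N : Fin s → Matrix (Fin r) (Fin r) R := fun i => A₀ * P i - lam i • P i with hN
  have hPN : ∀ i, P i * N i = N i := by
    intro i
    have h1 : P i * (A₀ * P i) = A₀ * P i := by
      rw [← mul_assoc, ← hPcomm i, mul_assoc, hPidem i]
    simp only [hN, mul_sub, h1, mul_smul_comm, hPidem i]
  have hNP : ∀ i, N i * P i = N i := by
    intro i
    simp only [hN, sub_mul, mul_assoc, hPidem i, smul_mul_assoc]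
  have hNr : ∀ i, N i ^ r = 0 := by
    intro i
    have hc : Commute (A₀ - lam i • 1) (P i) := by
      unfold Commute SemiconjBy
      rw [sub_mul, mul_sub, hPcomm i, smul_mul_assoc, one_mul, mul_smul_comm, mul_one]
    have hNi : N i = (A₀ - lam i • 1) * P i := by
      rw [hN, sub_mul, smul_mul_assoc, one_mul]
    rw [hNi, hc.mul_pow, idem_pow (hPidem i) r1, hPgen i]
  -- endomorphism machinery
  set l : Module.End R (Matrix (Fin r) (Fin r) R) := LinearMap.mulLeft R (N a) with hl
  set rr : Module.End R (Matrix (Fin r) (Fin r) R) := LinearMap.mulRight R (N b) with hrr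
  set La : Module.End R (Matrix (Fin r) (Fin r) R) := LinearMap.mulLeft R (P a) with hLa
  set Rb : Module.End R (Matrix (Fin r) (Fin r) R) := LinearMap.mulRight R (P b) with hRb
  set u : R := lam a - lam b with huu
  set φ : Module.End R (Matrix (Fin r) (Fin r) R) := u • 1 + (l - rr) with hφ
  have hφapp : ∀ Y, φ Y = u • Y + (N a * Y - Y * N b) := by
    intro Y
    simp [hφ, hl, hrr, LinearMap.mulLeft_apply, LinearMap.mulRight_apply]
  set π : Module.End R (Matrix (Fin r) (Fin r) R) := Rb * La with hπ
  have hπapp : ∀ Y, π Y = P a * Y * P b := by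
    intro Y
    simp [hπ, hRb, hLa, Module.End.mul_apply, LinearMap.mulLeft_apply,
      LinearMap.mulRight_apply]
  -- φ is a unit
  have hnil : IsNilpotent (l - rr) := by
    have hcom : Commute l rr := by
      apply LinearMap.ext; intro Y
      simp [hl, hrr, Module.End.mul_apply, LinearMap.mulLeft_apply,
        LinearMap.mulRight_apply, mul_assoc]
    refine hcom.isNilpotent_sub ⟨r, ?_⟩ ⟨r, ?_⟩
    · rw [hl, LinearMap.pow_mulLeft, hNr a, LinearMap.mulLeft_zero_eq_zero]
    · rw [hrr, LinearMap.pow_mulRight, hNr b, LinearMap.mulRight_zero_eq_zero]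
  have hu1 : IsUnit (u • (1 : Module.End R (Matrix (Fin r) (Fin r) R))) := by
    have : u • (1 : Module.End R (Matrix (Fin r) (Fin r) R)) =
        algebraMap R (Module.End R (Matrix (Fin r) (Fin r) R)) u := by
      simp [Algebra.algebraMap_eq_smul_one]
    rw [this]
    exact hu.map (algebraMap R _)
  have hcentral : Commute (l - rr) (u • (1 : Module.End R (Matrix (Fin r) (Fin r) R))) := by
    apply LinearMap.ext; intro Y
    simp [Module.End.mul_apply, LinearMap.smul_apply, map_smul]
  have hφunit : IsUnit φ := by
    rw [hφ]
    exact hnil.isUnit_add_left_of_commute hu1 hcentral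
  -- φ commutes with π
  have hcφLa : Commute φ La := by
    apply LinearMap.ext; intro Y
    simp only [Module.End.mul_apply, hφapp, hLa, LinearMap.mulLeft_apply]
    simp only [mul_add, mul_sub, mul_smul_comm, ← mul_assoc]
    rw [hNP a, hPN a]
  have hcφRb : Commute φ Rb := by
    apply LinearMap.ext; intro Y
    simp only [Module.End.mul_apply, hφapp, hRb, LinearMap.mulRight_apply]
    simp only [add_mul, sub_mul, smul_mul_assoc, mul_assoc]
    rw [hPN b, hNP b]
  have hcφπ : Commute φ π := by
    rw [hπ]
    exact hcφRb.mul_right hcφLa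
  obtain ⟨v, hv⟩ := hφunit
  have hψφ : ∀ w, (↑v⁻¹ : Module.End R (Matrix (Fin r) (Fin r) R)) (φ w) = w := by
    intro w
    rw [← hv, ← Module.End.mul_apply, v.inv_mul, Module.End.one_apply]
  have hφψ : ∀ w, φ ((↑v⁻¹ : Module.End R (Matrix (Fin r) (Fin r) R)) w) = w := by
    intro w
    rw [← hv, ← Module.End.mul_apply, v.mul_inv, Module.End.one_apply]
  have hπψ : ∀ w, π ((↑v⁻¹ : Module.End R (Matrix (Fin r) (Fin r) R)) w)
      = (↑v⁻¹ : Module.End R (Matrix (Fin r) (Fin r) R)) (π w) := by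
    have hc : Commute (↑v⁻¹ : Module.End R (Matrix (Fin r) (Fin r) R)) π := by
      have : Commute (↑v : Module.End R (Matrix (Fin r) (Fin r) R)) π := by
        rw [hv]; exact hcφπ
      exact Commute.units_inv_left this
    intro w
    rw [← Module.End.mul_apply, ← hc.eq, Module.End.mul_apply]
  -- the key identity
  have key : ∀ Z : Matrix (Fin r) (Fin r) R, P a * Z * P b = Z →
      A₀ * Z - Z * A₀ = φ Z := by
    intro Z hZ
    have hZa : P a * Z = Z := by
      conv_lhs => rw [← hZ]
      rw [← mul_assoc, ← mul_assoc, hPidem a, hZ]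
    have hZb : Z * P b = Z := by
      conv_lhs => rw [← hZ]
      rw [mul_assoc (P a * Z), hPidem b, hZ]
    have ha : N a * Z = A₀ * Z - lam a • Z := by
      simp only [hN, sub_mul, smul_mul_assoc]
      rw [mul_assoc, hZa]
    have hb : Z * N b = Z * A₀ - lam b • Z := by
      simp only [hN, mul_sub, mul_smul_comm, hPcomm b]
      rw [← mul_assoc, hZb]
    rw [hφapp, ha, hb, huu, sub_smul]
    abel
  set W : Matrix (Fin r) (Fin r) R := P a * G * P b with hW
  have hπW : π W = W := by
    rw [hπapp, hW, ← mul_assoc, ← mul_assoc, hPidem a, mul_assoc, hPidem b]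
  set Y : Matrix (Fin r) (Fin r) R := (↑v⁻¹ : Module.End R (Matrix (Fin r) (Fin r) R)) W with hY
  have hπY : P a * Y * P b = Y := by
    rw [← hπapp, hY, hπψ, hπW]
  refine ⟨Y, ⟨hπY, ?_⟩, ?_⟩
  · rw [key Y hπY, hY, hφψ]
  · rintro Y' ⟨h1, h2⟩
    have : φ Y' = W := by rw [← key Y' h1, h2]
    rw [hY, ← this, hψφ]

/-- The recursive gauge transformation: `(FBseq Ac P n).1` is the `n`-th coefficient of the
gauge matrix `F`, `(FBseq Ac P n).2` the `n`-th coefficient of the block-diagonal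
transformed connection matrix `B`. -/
noncomputable def FBseq (Ac : ℕ → Matrix (Fin r) (Fin r) R)
    (P : Fin s → Matrix (Fin r) (Fin r) R) :
    ℕ → Matrix (Fin r) (Fin r) R × Matrix (Fin r) (Fin r) R
  | 0 => (1, Ac 0)
  | n + 1 =>
    let H : Matrix (Fin r) (Fin r) R :=
      n • (FBseq Ac P n).1
        + (∑ k ∈ (Finset.range n).attach, Ac (k.1 + 1) * (FBseq Ac P (n - k.1)).1)
        - (∑ k ∈ (Finset.range n).attach, (FBseq Ac P (k.1 + 1)).1 * (FBseq Ac P (n - k.1)).2)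
        + Ac (n + 1)
    (∑ a : Fin s, ∑ b : Fin s, if a = b then 0 else solveBlock (Ac 0) (P a) (P b) (-H),
     ∑ a : Fin s, P a * H * P a)
  termination_by n => n
  decreasing_by
    all_goals first
      | omega
      | (have := k.2; simp only [Finset.mem_range] at this; omega)

/-- The inhomogeneous term in the gauge recursion. -/
noncomputable def Hgauge (Ac : ℕ → Matrix (Fin r) (Fin r) R)
    (P : Fin s → Matrix (Fin r) (Fin r) R) (n : ℕ) : Matrix (Fin r) (Fin r) R :=
  n • (FBseq Ac P n).1
    + (∑ k ∈ Finset.range n, Ac (k + 1) * (FBseq Ac P (n - k)).1)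
    - (∑ k ∈ Finset.range n, (FBseq Ac P (k + 1)).1 * (FBseq Ac P (n - k)).2)
    + Ac (n + 1)

lemma FBseq_zero (Ac : ℕ → Matrix (Fin r) (Fin r) R) (P : Fin s → Matrix (Fin r) (Fin r) R) :
    FBseq Ac P 0 = (1, Ac 0) := by
  rw [FBseq]

lemma FBseq_succ (Ac : ℕ → Matrix (Fin r) (Fin r) R) (P : Fin s → Matrix (Fin r) (Fin r) R)
    (n : ℕ) :
    FBseq Ac P (n + 1) =
      (∑ a : Fin s, ∑ b : Fin s,
          if a = b then 0 else solveBlock (Ac 0) (P a) (P b) (-(Hgauge Ac P n)),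
       ∑ a : Fin s, P a * Hgauge Ac P n * P a) := by
  rw [FBseq, Hgauge]
  simp only [Finset.sum_attach (Finset.range n) (fun k => Ac (k + 1) * (FBseq Ac P (n - k)).1),
    Finset.sum_attach (Finset.range n) (fun k => (FBseq Ac P (k + 1)).1 * (FBseq Ac P (n - k)).2)]

lemma sandwich_comm {P : Fin s → Matrix (Fin r) (Fin r) R}
    (hPidem : ∀ i, P i * P i = P i)
    (hPorth : ∀ i j, i ≠ j → P i * P j = 0)
    (H : Matrix (Fin r) (Fin r) R) (i : Fin s) :
    P i * (∑ a : Fin s, P a * H * P a) = (∑ a : Fin s, P a * H * P a) * P i := by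
  rw [Finset.mul_sum, Finset.sum_mul]
  have hl : ∀ a : Fin s, P i * (P a * H * P a) = if i = a then P i * H * P i else 0 := by
    intro a
    by_cases h : i = a
    · subst h
      rw [if_pos rfl, ← mul_assoc, ← mul_assoc, hPidem i]
    · rw [if_neg h, ← mul_assoc, ← mul_assoc, hPorth i a h, zero_mul, zero_mul]
  have hr : ∀ a : Fin s, (P a * H * P a) * P i = if i = a then P i * H * P i else 0 := by
    intro a
    by_cases h : i = a
    · subst h
      rw [if_pos rfl, mul_assoc, hPidem i]
    · rw [if_neg h, mul_assoc, hPorth a i (fun hh => h hh.symm), mul_zero]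
  simp only [hl, hr]

lemma sum_sandwich {P : Fin s → Matrix (Fin r) (Fin r) R} (hPsum : ∑ i, P i = 1)
    (H : Matrix (Fin r) (Fin r) R) :
    ∑ a : Fin s, ∑ b : Fin s, P a * H * P b = H := by
  have h : (∑ a : Fin s, P a) * H * (∑ b : Fin s, P b) =
      ∑ a : Fin s, ∑ b : Fin s, P a * H * P b := by
    simp only [Finset.sum_mul, Finset.mul_sum]
    exact Finset.sum_comm
  rw [← h, hPsum, one_mul, mul_one]

lemma gauge_rec (r1 : 1 ≤ r) (Ac : ℕ → Matrix (Fin r) (Fin r) R)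
    (lam : Fin s → R) (P : Fin s → Matrix (Fin r) (Fin r) R)
    (hPidem : ∀ i, P i * P i = P i)
    (hPsum : ∑ i, P i = 1)
    (hPorth : ∀ i j, i ≠ j → P i * P j = 0)
    (hPcomm : ∀ i, Ac 0 * P i = P i * Ac 0)
    (hPgen : ∀ i, (Ac 0 - lam i • (1 : Matrix (Fin r) (Fin r) R)) ^ r * P i = 0)
    (hunit : ∀ i j, i ≠ j → IsUnit (lam i - lam j)) (n : ℕ) :
    (if 2 ≤ n then (n - 1 : ℕ) • (FBseq Ac P (n - 1)).1 else 0)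
      + (∑ k ∈ Finset.range (n + 1), Ac k * (FBseq Ac P (n - k)).1)
      - (∑ k ∈ Finset.range (n + 1), (FBseq Ac P k).1 * (FBseq Ac P (n - k)).2) = 0 := by
  cases n with
  | zero =>
    simp [FBseq_zero]
  | succ n =>
    set H : Matrix (Fin r) (Fin r) R := Hgauge Ac P n with hH
    set Y : Fin s → Fin s → Matrix (Fin r) (Fin r) R :=
      fun a b => solveBlock (Ac 0) (P a) (P b) (-H) with hY
    have hspec : ∀ a b : Fin s, a ≠ b →
        P a * Y a b * P b = Y a b ∧
          Ac 0 * Y a b - Y a b * Ac 0 = P a * (-H) * P b := by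
      intro a b hab
      exact solveBlock_spec
        ((blockEU r1 (Ac 0) lam P hPidem hPcomm hPgen hab (hunit a b hab) (-H)).exists)
    have hF1 : (FBseq Ac P (n + 1)).1 = ∑ a : Fin s, ∑ b : Fin s,
        if a = b then 0 else Y a b := by
      rw [FBseq_succ]
    have hB1 : (FBseq Ac P (n + 1)).2 = ∑ a : Fin s, P a * H * P a := by
      rw [FBseq_succ]
    -- main commutator identity
    have hcomm : Ac 0 * (FBseq Ac P (n + 1)).1 - (FBseq Ac P (n + 1)).1 * Ac 0 =
        (FBseq Ac P (n + 1)).2 - H := by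
      rw [hF1, hB1, Finset.mul_sum, Finset.sum_mul]
      have expand : ∀ a : Fin s,
          Ac 0 * (∑ b : Fin s, if a = b then 0 else Y a b)
            - (∑ b : Fin s, if a = b then 0 else Y a b) * Ac 0 =
          ∑ b : Fin s, (if a = b then 0 else -(P a * H * P b)) := by
        intro a
        rw [Finset.mul_sum, Finset.sum_mul, ← Finset.sum_sub_distrib]
        apply Finset.sum_congr rfl
        intro b _
        by_cases h : a = b
        · simp [h]
        · rw [if_neg h, if_neg h, (hspec a b h).2]
          have : P a * (-H) * P b = -(P a * H * P b) := by
            rw [mul_neg, neg_mul]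
          rw [this]
      have step1 : ∑ a : Fin s, (Ac 0 * (∑ b : Fin s, if a = b then 0 else Y a b))
            - ∑ a : Fin s, ((∑ b : Fin s, if a = b then 0 else Y a b) * Ac 0) =
          ∑ a : Fin s, ∑ b : Fin s, (if a = b then 0 else -(P a * H * P b)) := by
        rw [← Finset.sum_sub_distrib]
        exact Finset.sum_congr rfl (fun a _ => expand a)
      rw [step1]
      have step2 : ∀ a : Fin s, ∑ b : Fin s, (if a = b then (0 : Matrix (Fin r) (Fin r) R)
          else -(P a * H * P b)) = P a * H * P a - ∑ b : Fin s, P a * H * P b := by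
        intro a
        have : ∀ b : Fin s, (if a = b then (0 : Matrix (Fin r) (Fin r) R)
            else -(P a * H * P b)) =
            (if a = b then P a * H * P b else 0) - P a * H * P b := by
          intro b
          by_cases h : a = b <;> simp [h]
        simp only [this, Finset.sum_sub_distrib, Finset.sum_ite_eq, Finset.mem_univ, if_pos]
      simp only [step2, Finset.sum_sub_distrib, sum_sandwich hPsum]
    -- now assemble
    have hite : (if 2 ≤ n + 1 then (n + 1 - 1 : ℕ) • (FBseq Ac P (n + 1 - 1)).1 else 0) =
        n • (FBseq Ac P n).1 := by
      rcases Nat.eq_zero_or_pos n with h0 | h0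
    -- n = 0: both sides 0
      · subst h0; simp
      · rw [if_pos (by omega)]
        simp
    have hsumA : ∑ k ∈ Finset.range (n + 2), Ac k * (FBseq Ac P (n + 1 - k)).1 =
        Ac 0 * (FBseq Ac P (n + 1)).1
          + (∑ k ∈ Finset.range n, Ac (k + 1) * (FBseq Ac P (n - k)).1)
          + Ac (n + 1) := by
      rw [Finset.sum_range_succ' (fun k => Ac k * (FBseq Ac P (n + 1 - k)).1) (n + 1)]
      simp only [Nat.succ_sub_succ]
      rw [Finset.sum_range_succ (fun k => Ac (k + 1) * (FBseq Ac P (n - k)).1) n]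
      rw [Nat.sub_self, FBseq_zero]
      simp only [Nat.sub_zero]
      rw [mul_one]
      abel
    have hsumB : ∑ k ∈ Finset.range (n + 2), (FBseq Ac P k).1 * (FBseq Ac P (n + 1 - k)).2 =
        (∑ k ∈ Finset.range n, (FBseq Ac P (k + 1)).1 * (FBseq Ac P (n - k)).2)
          + (FBseq Ac P (n + 1)).2
          + (FBseq Ac P (n + 1)).1 * Ac 0 := by
      rw [Finset.sum_range_succ (fun k => (FBseq Ac P k).1 * (FBseq Ac P (n + 1 - k)).2) (n + 1)]
      rw [Finset.sum_range_succ' (fun k => (FBseq Ac P k).1 * (FBseq Ac P (n + 1 - k)).2) n]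
      simp only [Nat.succ_sub_succ, Nat.sub_self, Nat.sub_zero, FBseq_zero, one_mul]
      try abel
    rw [hite, hsumA, hsumB]
    have hHdef : H = n • (FBseq Ac P n).1
        + (∑ k ∈ Finset.range n, Ac (k + 1) * (FBseq Ac P (n - k)).1)
        - (∑ k ∈ Finset.range n, (FBseq Ac P (k + 1)).1 * (FBseq Ac P (n - k)).2)
        + Ac (n + 1) := by rw [hH, Hgauge]
    calc n • (FBseq Ac P n).1
          + (Ac 0 * (FBseq Ac P (n + 1)).1
            + (∑ k ∈ Finset.range n, Ac (k + 1) * (FBseq Ac P (n - k)).1) + Ac (n + 1))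
          - ((∑ k ∈ Finset.range n, (FBseq Ac P (k + 1)).1 * (FBseq Ac P (n - k)).2)
            + (FBseq Ac P (n + 1)).2 + (FBseq Ac P (n + 1)).1 * Ac 0)
        = (Ac 0 * (FBseq Ac P (n + 1)).1 - (FBseq Ac P (n + 1)).1 * Ac 0)
            + H - (FBseq Ac P (n + 1)).2 := by
          rw [hHdef]; abel
      _ = 0 := by rw [hcomm]; abel

lemma Bc_comm (Ac : ℕ → Matrix (Fin r) (Fin r) R) (P : Fin s → Matrix (Fin r) (Fin r) R)
    (hPidem : ∀ i, P i * P i = P i)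
    (hPorth : ∀ i j, i ≠ j → P i * P j = 0)
    (hPcomm : ∀ i, Ac 0 * P i = P i * Ac 0)
    (n : ℕ) (i : Fin s) :
    P i * (FBseq Ac P n).2 = (FBseq Ac P n).2 * P i := by
  cases n with
  | zero => rw [FBseq_zero]; exact (hPcomm i).symm
  | succ n =>
    rw [FBseq_succ]
    exact sandwich_comm hPidem hPorth _ i

lemma constTerm_mul (E F : Matrix (Fin r) (Fin r) (PowerSeries R)) :
    constTerm (E * F) = constTerm E * constTerm F := by
  rw [constTerm_eq, constTerm_eq, constTerm_eq, mcoeff_mul, Finset.sum_range_one]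

lemma exists_part (r1 : 1 ≤ r) (A : Matrix (Fin r) (Fin r) (PowerSeries R))
    (lam : Fin s → R)
    (hunit : ∀ i j, i ≠ j → IsUnit (lam i - lam j))
    (P : Fin s → Matrix (Fin r) (Fin r) R)
    (hPidem : ∀ i, P i * P i = P i)
    (hPsum : ∑ i, P i = 1)
    (hPorth : ∀ i j, i ≠ j → P i * P j = 0)
    (hPcomm : ∀ i, constTerm A * P i = P i * constTerm A)
    (hPgen : ∀ i, (constTerm A - lam i • (1 : Matrix (Fin r) (Fin r) R)) ^ r * P i = 0) :
    ∃ E : Fin s → Matrix (Fin r) (Fin r) (PowerSeries R),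
      (∀ i, IsCovariantlyConstant A (E i)) ∧
      (∑ i, E i = 1) ∧
      (∀ i j, i ≠ j → E i * E j = 0) ∧
      (∀ i, constTerm (E i) = P i) := by
  classical
  set Ac : ℕ → Matrix (Fin r) (Fin r) R := fun n => mcoeff n A with hAc
  have hA0 : Ac 0 = constTerm A := (constTerm_eq A).symm
  have hPcomm' : ∀ i, Ac 0 * P i = P i * Ac 0 := by rw [hA0]; exact hPcomm
  have hPgen' : ∀ i, (Ac 0 - lam i • (1 : Matrix (Fin r) (Fin r) R)) ^ r * P i = 0 := by
    rw [hA0]; exact hPgen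
  set F : Matrix (Fin r) (Fin r) (PowerSeries R) := mmk (fun n => (FBseq Ac P n).1) with hF
  set B : Matrix (Fin r) (Fin r) (PowerSeries R) := mmk (fun n => (FBseq Ac P n).2) with hB
  -- the gauge equation at series level
  have hgauge : (PowerSeries.X ^ 2 : PowerSeries R) • matDeriv F + A * F - F * B = 0 := by
    apply mcoeff_ext
    intro n
    rw [mcoeff_sub, mcoeff_add, mcoeff_X2_smul, mcoeff_mul, mcoeff_mul, mcoeff_zero]
    simp only [hF, hB, mcoeff_mmk]
    exact gauge_rec r1 Ac lam P hPidem hPsum hPorth hPcomm' hPgen' hunit n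
  -- the commutation of B with the projections
  set Pmap : Fin s → Matrix (Fin r) (Fin r) (PowerSeries R) :=
    fun i => (P i).map (PowerSeries.C (R := R)) with hPmap
  have hBP : ∀ i, B * Pmap i = Pmap i * B := by
    intro i
    apply mcoeff_ext
    intro n
    rw [mcoeff_mul, mcoeff_mul]
    simp only [hF, hB, hPmap, mcoeff_mmk, mcoeff_map_C]
    have hL : ∑ k ∈ Finset.range (n + 1),
        (FBseq Ac P k).2 * (if n - k = 0 then P i else 0) = (FBseq Ac P n).2 * P i := by
      rw [Finset.sum_eq_single n]
      · simp
      · intro k hk hkn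
        rw [if_neg (by simp at hk; omega), mul_zero]
      · intro h; exact absurd (Finset.self_mem_range_succ n) h
    have hR : ∑ k ∈ Finset.range (n + 1),
        (if k = 0 then P i else 0) * (FBseq Ac P (n - k)).2 = P i * (FBseq Ac P n).2 := by
      rw [Finset.sum_eq_single 0]
      · simp
      · intro k hk hkn
        rw [if_neg hkn, zero_mul]
      · intro h; simp at h
    rw [hL, hR]
    exact (Bc_comm Ac P hPidem hPorth hPcomm' n i).symm
  -- F is invertible
  have hconstF : constTerm F = 1 := by
    rw [constTerm_eq, hF, mcoeff_mmk, FBseq_zero]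
  have hFunit : IsUnit F := by
    rw [Matrix.isUnit_iff_isUnit_det]
    have hdet : PowerSeries.constantCoeff (R := R) F.det = 1 := by
      have h1 : PowerSeries.constantCoeff (R := R) F.det =
          (F.map (PowerSeries.constantCoeff (R := R))).det := RingHom.map_det _ _
      have h2 : F.map (PowerSeries.constantCoeff (R := R)) = constTerm F := rfl
      rw [h1, h2, hconstF, Matrix.det_one]
    rw [PowerSeries.isUnit_iff_constantCoeff, hdet]
    exact isUnit_one
  obtain ⟨v, hv⟩ := hFunit
  -- lift the projections
  have hPmapmul : ∀ i j, Pmap i * Pmap j = ((P i * P j).map (PowerSeries.C (R := R))) := by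
    intro i j
    rw [hPmap, Matrix.map_mul]
  have hPmapsum : ∑ i, Pmap i = 1 := by
    have : ∑ i, Pmap i = ((∑ i, P i).map (PowerSeries.C (R := R))) := by
      funext p q
      simp [hPmap, Matrix.sum_apply, Matrix.map_apply]
    rw [this, hPsum]
    exact Matrix.map_one _ (map_zero _) (map_one _)
  have hconstPmap : ∀ i, constTerm (Pmap i) = P i := by
    intro i
    rw [constTerm_eq, hPmap, mcoeff_map_C, if_pos rfl]
  -- the family
  set V : Matrix (Fin r) (Fin r) (PowerSeries R) := (↑v : Matrix (Fin r) (Fin r) (PowerSeries R)) with hV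
  set W : Matrix (Fin r) (Fin r) (PowerSeries R) := (↑v⁻¹ : Matrix (Fin r) (Fin r) (PowerSeries R)) with hW
  have hVW : V * W = 1 := v.mul_inv
  have hWV : W * V = 1 := v.inv_mul
  have hVF : V = F := hv
  have hcancel : ∀ Z : Matrix (Fin r) (Fin r) (PowerSeries R), Z * F = 0 → Z = 0 := by
    intro Z h
    have h2 : Z * F * W = 0 := by rw [h, zero_mul]
    rwa [← hVF, mul_assoc, hVW, mul_one] at h2
  refine ⟨fun i => V * Pmap i * W, ?_, ?_, ?_, ?_⟩
  · -- covariant constancy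
    intro i
    show (PowerSeries.X ^ 2 : PowerSeries R) • matDeriv (V * Pmap i * W)
      + A * (V * Pmap i * W) - (V * Pmap i * W) * A = 0
    set Ei : Matrix (Fin r) (Fin r) (PowerSeries R) := V * Pmap i * W with hEi
    have hEF : Ei * F = F * Pmap i := by
      rw [hEi, ← hVF, mul_assoc, hWV, mul_one]
    apply hcancel
    have hT : (PowerSeries.X ^ 2 : PowerSeries R) • matDeriv F = F * B - A * F := by
      rw [← sub_eq_zero]
      calc (PowerSeries.X ^ 2 : PowerSeries R) • matDeriv F - (F * B - A * F)
          = (PowerSeries.X ^ 2 : PowerSeries R) • matDeriv F + A * F - F * B := by abel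
        _ = 0 := hgauge
    have hDEF : matDeriv Ei * F = matDeriv F * Pmap i - Ei * matDeriv F := by
      have h1 : matDeriv (Ei * F) = matDeriv Ei * F + Ei * matDeriv F := matDeriv_mul _ _
      have h2 : matDeriv (Ei * F) = matDeriv F * Pmap i := by
        rw [hEF, matDeriv_mul, hPmap, matDeriv_map_C, mul_zero, add_zero]
      rw [eq_sub_iff_add_eq, ← h1, h2]
    rw [sub_mul, add_mul, smul_mul_assoc, hDEF, smul_sub,
      show (PowerSeries.X ^ 2 : PowerSeries R) • (matDeriv F * Pmap i) =
        ((PowerSeries.X ^ 2 : PowerSeries R) • matDeriv F) * Pmap i from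
          (smul_mul_assoc _ _ _).symm,
      show (PowerSeries.X ^ 2 : PowerSeries R) • (Ei * matDeriv F) =
        Ei * ((PowerSeries.X ^ 2 : PowerSeries R) • matDeriv F) from
          (mul_smul_comm _ _ _).symm,
      hT]
    have e1 : F * B * Pmap i = Ei * (F * B) := by
      rw [mul_assoc, hBP i, ← mul_assoc, ← hEF, mul_assoc]
    have e2 : A * Ei * F = A * F * Pmap i := by
      rw [mul_assoc, hEF, ← mul_assoc]
    have e3 : Ei * A * F = Ei * (A * F) := mul_assoc _ _ _
    simp only [sub_mul, mul_sub]
    rw [e1, e2, e3]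
    abel
  · -- sum is one
    show ∑ i, (V * Pmap i * W) = 1
    have h : ∑ i, (V * Pmap i * W) = V * (∑ i, Pmap i) * W := by
      rw [Finset.mul_sum, Finset.sum_mul]
    rw [h, hPmapsum, mul_one, hVW]
  · -- orthogonality
    intro i j hij
    show (V * Pmap i * W) * (V * Pmap j * W) = 0
    have hWVZ : ∀ Z : Matrix (Fin r) (Fin r) (PowerSeries R), W * (V * Z) = Z := by
      intro Z
      rw [← mul_assoc, hWV, one_mul]
    have h : (V * Pmap i * W) * (V * Pmap j * W) = V * (Pmap i * (Pmap j * W)) := by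
      simp only [mul_assoc, hWVZ]
    rw [h, ← mul_assoc (Pmap i), hPmapmul, hPorth i j hij]
    simp
  · -- constant terms
    intro i
    have hcv : constTerm V = 1 := by rw [hVF]; exact hconstF
    have hcvi : constTerm W = 1 := by
      have h : constTerm (W * V) = 1 := by
        rw [hWV, constTerm_eq, mcoeff_one, if_pos rfl]
      rwa [constTerm_mul, hcv, mul_one] at h
    show constTerm (V * Pmap i * W) = P i
    rw [constTerm_mul, constTerm_mul, hcv, hcvi, one_mul, mul_one, hconstPmap]

lemma unique_part (r1 : 1 ≤ r) (A : Matrix (Fin r) (Fin r) (PowerSeries R))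
    (lam : Fin s → R)
    (hunit : ∀ i j, i ≠ j → IsUnit (lam i - lam j))
    (P : Fin s → Matrix (Fin r) (Fin r) R)
    (hPidem : ∀ i, P i * P i = P i)
    (hPsum : ∑ i, P i = 1)
    (hPorth : ∀ i j, i ≠ j → P i * P j = 0)
    (hPcomm : ∀ i, constTerm A * P i = P i * constTerm A)
    (hPgen : ∀ i, (constTerm A - lam i • (1 : Matrix (Fin r) (Fin r) R)) ^ r * P i = 0)
    (E E' : Fin s → Matrix (Fin r) (Fin r) (PowerSeries R))
    (hcov : ∀ i, IsCovariantlyConstant A (E i)) (hsum : ∑ i, E i = 1)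
    (horth : ∀ i j, i ≠ j → E i * E j = 0) (hconst : ∀ i, constTerm (E i) = P i)
    (hcov' : ∀ i, IsCovariantlyConstant A (E' i)) (hsum' : ∑ i, E' i = 1)
    (horth' : ∀ i j, i ≠ j → E' i * E' j = 0) (hconst' : ∀ i, constTerm (E' i) = P i) :
    E = E' := by
  classical
  set A₀ : Matrix (Fin r) (Fin r) R := mcoeff 0 A with hA₀
  have hA0c : A₀ = constTerm A := (constTerm_eq A).symm
  have hPcomm0 : ∀ i, A₀ * P i = P i * A₀ := by rw [hA0c]; exact hPcomm
  have hPgen0 : ∀ i, (A₀ - lam i • (1 : Matrix (Fin r) (Fin r) R)) ^ r * P i = 0 := by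
    rw [hA0c]; exact hPgen
  -- idempotency of each family
  have hidem : ∀ (Z : Fin s → Matrix (Fin r) (Fin r) (PowerSeries R)),
      (∑ i, Z i = 1) → (∀ i j, i ≠ j → Z i * Z j = 0) → ∀ i, Z i * Z i = Z i := by
    intro Z hZsum hZorth i
    have h2 : ∑ j, Z i * Z j = Z i * Z i := by
      apply Finset.sum_eq_single i
      · intro j _ hj
        exact hZorth i j (fun hh => hj hh.symm)
      · intro h; exact absurd (Finset.mem_univ i) h
    rw [← h2, ← Finset.mul_sum, hZsum, mul_one]
  -- covariant constancy, coefficientwise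
  have cc : ∀ (Zi : Matrix (Fin r) (Fin r) (PowerSeries R)), IsCovariantlyConstant A Zi →
      ∀ n, (if 2 ≤ n then (n - 1 : ℕ) • mcoeff (n - 1) Zi else 0)
        + (∑ k ∈ Finset.range (n + 1), mcoeff k A * mcoeff (n - k) Zi)
        - (∑ k ∈ Finset.range (n + 1), mcoeff k Zi * mcoeff (n - k) A) = 0 := by
    intro Zi hZ n
    replace hZ : (PowerSeries.X ^ 2 : PowerSeries R) • matDeriv Zi + A * Zi - Zi * A = 0 := hZ
    have h := congrArg (mcoeff n) hZ
    rwa [mcoeff_sub, mcoeff_add, mcoeff_X2_smul, mcoeff_mul, mcoeff_mul, mcoeff_zero] at h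
  have peelA : ∀ (Zi : Matrix (Fin r) (Fin r) (PowerSeries R)) (m : ℕ),
      ∑ k ∈ Finset.range (m + 2), mcoeff k A * mcoeff (m + 1 - k) Zi
        = mcoeff 0 A * mcoeff (m + 1) Zi
          + ∑ k ∈ Finset.range (m + 1), mcoeff (k + 1) A * mcoeff (m - k) Zi := by
    intro Zi m
    rw [Finset.sum_range_succ' (fun k => mcoeff k A * mcoeff (m + 1 - k) Zi) (m + 1)]
    simp only [Nat.succ_sub_succ, Nat.sub_zero]
    abel
  have peelZ : ∀ (Zi : Matrix (Fin r) (Fin r) (PowerSeries R)) (m : ℕ),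
      ∑ k ∈ Finset.range (m + 2), mcoeff k Zi * mcoeff (m + 1 - k) A
        = (∑ k ∈ Finset.range (m + 1), mcoeff k Zi * mcoeff (m + 1 - k) A)
          + mcoeff (m + 1) Zi * mcoeff 0 A := by
    intro Zi m
    rw [Finset.sum_range_succ (fun k => mcoeff k Zi * mcoeff (m + 1 - k) A) (m + 1)]
    simp [Nat.sub_self]
  have commeq : ∀ (Zi : Matrix (Fin r) (Fin r) (PowerSeries R)), IsCovariantlyConstant A Zi →
      ∀ m : ℕ, A₀ * mcoeff (m + 1) Zi - mcoeff (m + 1) Zi * A₀ =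
        -((if 2 ≤ m + 1 then (m : ℕ) • mcoeff m Zi else 0)
          + (∑ k ∈ Finset.range (m + 1), mcoeff (k + 1) A * mcoeff (m - k) Zi)
          - (∑ k ∈ Finset.range (m + 1), mcoeff k Zi * mcoeff (m + 1 - k) A)) := by
    intro Zi hZ m
    have h := cc Zi hZ (m + 1)
    rw [peelA Zi m, peelZ Zi m] at h
    have hIT : (if 2 ≤ m + 1 then (m + 1 - 1 : ℕ) • mcoeff (m + 1 - 1) Zi else 0)
        = (if 2 ≤ m + 1 then (m : ℕ) • mcoeff m Zi else 0) := by
      simp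
    rw [hIT] at h
    apply eq_neg_of_add_eq_zero_left
    calc A₀ * mcoeff (m + 1) Zi - mcoeff (m + 1) Zi * A₀
          + ((if 2 ≤ m + 1 then (m : ℕ) • mcoeff m Zi else 0)
            + (∑ k ∈ Finset.range (m + 1), mcoeff (k + 1) A * mcoeff (m - k) Zi)
            - (∑ k ∈ Finset.range (m + 1), mcoeff k Zi * mcoeff (m + 1 - k) A))
        = (if 2 ≤ m + 1 then (m : ℕ) • mcoeff m Zi else 0)
            + (mcoeff 0 A * mcoeff (m + 1) Zi
              + ∑ k ∈ Finset.range (m + 1), mcoeff (k + 1) A * mcoeff (m - k) Zi)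
            - ((∑ k ∈ Finset.range (m + 1), mcoeff k Zi * mcoeff (m + 1 - k) A)
              + mcoeff (m + 1) Zi * mcoeff 0 A) := by rw [hA₀]; abel
      _ = 0 := h
  -- idempotency coefficientwise
  have idemco : ∀ (Zi : Matrix (Fin r) (Fin r) (PowerSeries R)) (i : Fin s),
      Zi * Zi = Zi → mcoeff 0 Zi = P i → ∀ m : ℕ,
      P i * mcoeff (m + 1) Zi + mcoeff (m + 1) Zi * P i
        + (∑ k ∈ Finset.range m, mcoeff (k + 1) Zi * mcoeff (m - k) Zi)
        = mcoeff (m + 1) Zi := by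
    intro Zi i hid hz0 m
    have h := congrArg (mcoeff (m + 1)) hid
    rw [mcoeff_mul] at h
    rw [Finset.sum_range_succ (fun k => mcoeff k Zi * mcoeff (m + 1 - k) Zi) (m + 1)] at h
    rw [Finset.sum_range_succ' (fun k => mcoeff k Zi * mcoeff (m + 1 - k) Zi) m] at h
    simp only [Nat.succ_sub_succ, Nat.sub_zero, Nat.sub_self] at h
    rw [hz0] at h
    conv_rhs => rw [← h]
    abel
  -- the sandwich identities
  have sand : ∀ (z : Matrix (Fin r) (Fin r) R) (a b : Fin s),
      P a * (P a * z * P b) * P b = P a * z * P b := by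
    intro z a b
    rw [← mul_assoc, ← mul_assoc, hPidem a, mul_assoc, hPidem b]
  have conj : ∀ (z : Matrix (Fin r) (Fin r) R) (a b : Fin s),
      A₀ * (P a * z * P b) - (P a * z * P b) * A₀ = P a * (A₀ * z - z * A₀) * P b := by
    intro z a b
    have h1 : A₀ * (P a * z * P b) = P a * (A₀ * z) * P b := by
      rw [← mul_assoc, ← mul_assoc, hPcomm0 a, mul_assoc (P a) A₀ z]
    have h2 : (P a * z * P b) * A₀ = P a * (z * A₀) * P b := by
      rw [mul_assoc, ← hPcomm0 b, ← mul_assoc, mul_assoc (P a) z A₀]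
    rw [h1, h2]
    simp only [mul_sub, sub_mul]
  -- main induction
  have hz0E : ∀ i, mcoeff 0 (E i) = P i := by
    intro i; rw [← constTerm_eq, hconst i]
  have hz0E' : ∀ i, mcoeff 0 (E' i) = P i := by
    intro i; rw [← constTerm_eq, hconst' i]
  have hidE := hidem E hsum horth
  have hidE' := hidem E' hsum' horth'
  have main : ∀ n i, mcoeff n (E i) = mcoeff n (E' i) := by
    intro n
    induction n using Nat.strong_induction_on with
    | _ n ih =>
      match n with
      | 0 => intro i; rw [hz0E i, hz0E' i]
      | (m + 1) =>
        intro i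
        have hih : ∀ j, j ≤ m → mcoeff j (E' i) = mcoeff j (E i) :=
          fun j hj => (ih j (by omega) i).symm
        -- the common commutator right-hand side
        set G : Matrix (Fin r) (Fin r) R :=
          -((if 2 ≤ m + 1 then (m : ℕ) • mcoeff m (E i) else 0)
            + (∑ k ∈ Finset.range (m + 1), mcoeff (k + 1) A * mcoeff (m - k) (E i))
            - (∑ k ∈ Finset.range (m + 1), mcoeff k (E i) * mcoeff (m + 1 - k) A)) with hG
        have hcz : A₀ * mcoeff (m + 1) (E i) - mcoeff (m + 1) (E i) * A₀ = G :=
          commeq (E i) (hcov i) m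
        have hcz' : A₀ * mcoeff (m + 1) (E' i) - mcoeff (m + 1) (E' i) * A₀ = G := by
          rw [commeq (E' i) (hcov' i) m, hG]
          have e1 : (if 2 ≤ m + 1 then (m : ℕ) • mcoeff m (E' i) else 0)
              = (if 2 ≤ m + 1 then (m : ℕ) • mcoeff m (E i) else 0) := by
            rw [hih m le_rfl]
          have e2 : (∑ k ∈ Finset.range (m + 1), mcoeff (k + 1) A * mcoeff (m - k) (E' i))
              = ∑ k ∈ Finset.range (m + 1), mcoeff (k + 1) A * mcoeff (m - k) (E i) :=
            Finset.sum_congr rfl (fun k _ => by rw [hih (m - k) (by omega)])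
          have e3 : (∑ k ∈ Finset.range (m + 1), mcoeff k (E' i) * mcoeff (m + 1 - k) A)
              = ∑ k ∈ Finset.range (m + 1), mcoeff k (E i) * mcoeff (m + 1 - k) A :=
            Finset.sum_congr rfl
              (fun k hk => by rw [hih k (by simp only [Finset.mem_range] at hk; omega)])
          rw [e1, e2, e3]
        -- off-diagonal blocks agree
        have hoff : ∀ a b : Fin s, a ≠ b →
            P a * mcoeff (m + 1) (E i) * P b = P a * mcoeff (m + 1) (E' i) * P b := by
          intro a b hab
          have EU := blockEU r1 A₀ lam P hPidem hPcomm0 hPgen0 hab (hunit a b hab) G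
          refine EU.unique ⟨sand _ a b, ?_⟩ ⟨sand _ a b, ?_⟩
          · rw [conj _ a b, hcz]
          · rw [conj _ a b, hcz']
        -- diagonal blocks agree
        have hdiagform : ∀ (Zi : Matrix (Fin r) (Fin r) (PowerSeries R)),
            (P i * mcoeff (m + 1) Zi + mcoeff (m + 1) Zi * P i
              + (∑ k ∈ Finset.range m, mcoeff (k + 1) Zi * mcoeff (m - k) Zi)
              = mcoeff (m + 1) Zi) →
            ∀ a : Fin s, P a * mcoeff (m + 1) Zi * P a =
              (if i = a
                then -(P a * (∑ k ∈ Finset.range m, mcoeff (k + 1) Zi * mcoeff (m - k) Zi) * P a)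
                else P a * (∑ k ∈ Finset.range m, mcoeff (k + 1) Zi * mcoeff (m - k) Zi) * P a) := by
          intro Zi hid a
          set z : Matrix (Fin r) (Fin r) R := mcoeff (m + 1) Zi with hz
          set Mid : Matrix (Fin r) (Fin r) R :=
            ∑ k ∈ Finset.range m, mcoeff (k + 1) Zi * mcoeff (m - k) Zi with hMid
          have hconj : P a * (P i * z) * P a + P a * (z * P i) * P a + P a * Mid * P a
              = P a * z * P a := by
            have h := congrArg (fun w => P a * w * P a) hid
            simpa only [mul_add, add_mul] using h
          by_cases h : i = a
          · subst h
            rw [if_pos rfl]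
            have t1 : P i * (P i * z) * P i = P i * z * P i := by
              rw [← mul_assoc, hPidem i]
            have t2 : P i * (z * P i) * P i = P i * z * P i := by
              rw [← mul_assoc, mul_assoc (P i * z), hPidem i]
            rw [t1, t2] at hconj
            apply eq_neg_of_add_eq_zero_left
            calc P i * z * P i + P i * Mid * P i
                = (P i * z * P i + P i * z * P i + P i * Mid * P i) - P i * z * P i := by abel
              _ = P i * z * P i - P i * z * P i := by rw [hconj]
              _ = 0 := sub_self _
          · rw [if_neg h]
            have t1 : P a * (P i * z) * P a = 0 := by
              rw [← mul_assoc, hPorth a i (fun hh => h hh.symm), zero_mul, zero_mul]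
            have t2 : P a * (z * P i) * P a = 0 := by
              rw [← mul_assoc, mul_assoc (P a * z), hPorth i a h, mul_zero]
            rw [t1, t2, zero_add, zero_add] at hconj
            exact hconj.symm
        have hdiag : ∀ a : Fin s,
            P a * mcoeff (m + 1) (E i) * P a = P a * mcoeff (m + 1) (E' i) * P a := by
          intro a
          have hMids : (∑ k ∈ Finset.range m, mcoeff (k + 1) (E' i) * mcoeff (m - k) (E' i))
              = ∑ k ∈ Finset.range m, mcoeff (k + 1) (E i) * mcoeff (m - k) (E i) :=
            Finset.sum_congr rfl (fun k hk => by
              rw [hih (k + 1) (by simp only [Finset.mem_range] at hk; omega),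
                hih (m - k) (by omega)])
          rw [hdiagform (E i) (idemco (E i) i (hidE i) (hz0E i) m) a,
            hdiagform (E' i) (idemco (E' i) i (hidE' i) (hz0E' i) m) a, hMids]
        -- reassemble from blocks
        have hdec : ∀ z : Matrix (Fin r) (Fin r) R,
            z = ∑ a : Fin s, ∑ b : Fin s, P a * z * P b :=
          fun z => (sum_sandwich hPsum z).symm
        rw [hdec (mcoeff (m + 1) (E i)), hdec (mcoeff (m + 1) (E' i))]
        refine Finset.sum_congr rfl (fun a _ => Finset.sum_congr rfl (fun b _ => ?_))
        by_cases h : a = b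
        · subst h; exact hdiag a
        · exact hoff a b h
  funext i
  apply mcoeff_ext
  intro n
  exact main n i

end CovSplit

/-- Let `R` be an integral domain and `A` a matrix over `R[[τ]]` whose leading term `A⁰` has
characteristic polynomial `∏ᵢ (X − λᵢ)^{rᵢ}`, with the `λᵢ` distinct and `λᵢ − λⱼ` invertible
for `i ≠ j`, and let `Pᵢ` be the generalized eigenprojections of `A⁰`. Then there is a unique
family `E₁, …, E_s` of covariantly constant matrices over `R[[τ]]` with `ΣᵢEᵢ = 1`,
`EᵢEⱼ = 0` for `i ≠ j`, and constant term of `Eᵢ` equal to `Pᵢ`. -/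
theorem exists_unique_covariantly_constant_splitting
    {R : Type} [CommRing R] [IsDomain R] (r : ℕ) (hr : 1 ≤ r)
    (A : Matrix (Fin r) (Fin r) (PowerSeries R))
    (s : ℕ) (lam : Fin s → R) (hinj : Function.Injective lam)
    (hunit : ∀ i j, i ≠ j → IsUnit (lam i - lam j))
    (rmult : Fin s → ℕ)
    (hchar : (constTerm A).charpoly = ∏ i, (Polynomial.X - Polynomial.C (lam i)) ^ rmult i)
    (P : Fin s → Matrix (Fin r) (Fin r) R)
    (hPidem : ∀ i, P i * P i = P i)
    (hPsum : ∑ i, P i = 1)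
    (hPorth : ∀ i j, i ≠ j → P i * P j = 0)
    (hPcomm : ∀ i, constTerm A * P i = P i * constTerm A)
    (hPgen : ∀ i, (constTerm A - lam i • (1 : Matrix (Fin r) (Fin r) R)) ^ r * P i = 0) :
    ∃! E : Fin s → Matrix (Fin r) (Fin r) (PowerSeries R),
      (∀ i, IsCovariantlyConstant A (E i)) ∧
      (∑ i, E i = 1) ∧
      (∀ i j, i ≠ j → E i * E j = 0) ∧
      (∀ i, constTerm (E i) = P i) := by
  obtain ⟨E, hE⟩ :=
    CovSplit.exists_part hr A lam hunit P hPidem hPsum hPorth hPcomm hPgen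
  refine ⟨E, hE, ?_⟩
  intro E' hE'
  exact CovSplit.unique_part hr A lam hunit P hPidem hPsum hPorth hPcomm hPgen
    E' E hE'.1 hE'.2.1 hE'.2.2.1 hE'.2.2.2 hE.1 hE.2.1 hE.2.2.1 hE.2.2.2
end
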